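/- Let e be an n-tuple of positive integers and v ∈ ℚ^n. Then D_ℓ(σ,e,Q,v) = Σ_x 𝐁_e^{L,−x̄_1}(σ_ℓ^{−1}(x+π_ℓ v), σ^{−1}Q), where x runs over a set of representatives in ℤ^n of ℤ^n/σ_ℓℤ^n and x̄_1 denotes the class of the first coordinate x_1 in ℤ/ℓℤ; each summand is independent of the chosen representative of its class. -/

import Mathlib

open scoped BigOperators
open scoped Classical

/-- The periodic Bernoulli function `B_k`, restricted to rational arguments
(where it takes rational values). -/
noncomputable def periodicBernoulliQ (k : ℕ) (x : ℚ) : ℚ :=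
  if k = 1 then (if ∃ z : ℤ, x = (z : ℚ) then 0 else Int.fract x - 1 / 2)
  else Polynomial.eval (Int.fract x) (Polynomial.bernoulli k)

/-- The sign (±1) of a nonzero real number, as a rational number. -/
noncomputable def sgnQ (t : ℝ) : ℚ := if 0 < t then 1 else -1

/-- The set `J(e,v) = {j : e_j = 1 and v_j ∈ ℤ}`. -/
noncomputable def Jset {n : ℕ} (e : Fin n → ℕ) (v : Fin n → ℚ) : Finset (Fin n) :=
  Finset.univ.filter (fun j => e j = 1 ∧ ∃ z : ℤ, v j = (z : ℚ))

/-- `𝐁_e(v,Q)`, at rational arguments (where it takes rational values). -/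
noncomputable def BBQ {n m : ℕ} (Q : Matrix (Fin m) (Fin n) ℝ) (e : Fin n → ℕ)
    (v : Fin n → ℚ) : ℚ :=
  (1 / (m : ℚ)) * ∑ i : Fin m,
    (∏ j ∈ Jset e v, sgnQ (Q i j) / 2) *
      ∏ j ∈ (Jset e v)ᶜ, periodicBernoulliQ (e j) (v j)

/-- `𝐁_e^{L,z}(x,Q)` at rational arguments, where
`L(y) = a_1 y_1 + ⋯ + a_n y_n mod ℓ`. -/
noncomputable def BBLz {n m : ℕ} (ℓ : ℕ) (a : Fin n → ℤ)
    (Q : Matrix (Fin m) (Fin n) ℝ) (e : Fin n → ℕ) (z : ZMod ℓ) (x : Fin n → ℚ) : ℚ :=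
  BBQ Q e x - (ℓ : ℚ) ^ ((1 : ℤ) - (n : ℤ) + ∑ j, (e j : ℤ)) *
    ∑ y : Fin n → Fin ℓ,
      if (∑ j, (a j : ZMod ℓ) * ((y j : ℕ) : ZMod ℓ)) = z then
        BBQ Q e (fun j => (x j + ((y j : ℕ) : ℚ)) / (ℓ : ℚ)) else 0

/-- `reps` is a complete system of representatives of `ℤ^n/Mℤ^n`. -/
def IsRepSystem {n : ℕ} (M : Matrix (Fin n) (Fin n) ℤ) {ι : Type} [Fintype ι]
    (reps : ι → Fin n → ℤ) : Prop :=
  ∀ w : Fin n → ℤ, ∃! i : ι, ∃ t : Fin n → ℤ, w = reps i + M.mulVec t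

/-- `σ_ℓ = π_ℓ·(1/ℓ)·σ`: keep the first row of `σ`, divide the other rows by `ℓ`. -/
def sigmaL {n : ℕ} [NeZero n] (ℓ : ℕ) (σ : Matrix (Fin n) (Fin n) ℤ) :
    Matrix (Fin n) (Fin n) ℤ :=
  Matrix.of fun i j => if i = 0 then σ i j else σ i j / (ℓ : ℤ)

/-- An integer matrix viewed as a rational matrix. -/
def matQ {n : ℕ} (σ : Matrix (Fin n) (Fin n) ℤ) : Matrix (Fin n) (Fin n) ℚ :=
  σ.map (Int.cast)

/-- `σ⁻¹Q = Q·(σ⁻¹)ᵀ`: the action of `σ⁻¹` on the `m`-tuple of linear forms `Q`. -/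
noncomputable def Qtransf {n m : ℕ} (σ : Matrix (Fin n) (Fin n) ℤ)
    (Q : Matrix (Fin m) (Fin n) ℝ) : Matrix (Fin m) (Fin n) ℝ :=
  Q * (((matQ σ)⁻¹).map (Rat.cast)).transpose

/-- `π_ℓ v`: multiply the first coordinate of `v` by `ℓ`. -/
def piLvec {n : ℕ} [NeZero n] (ℓ : ℕ) (v : Fin n → ℚ) : Fin n → ℚ :=
  fun j => if j = 0 then (ℓ : ℚ) * v 0 else v j

/-- The smoothed Dedekind sum `D_ℓ(σ,e,Q,v)`, computed with respect to systems of
representatives `reps₁` of `ℤ^n/σ_ℓℤ^n` and `reps₂` of `ℤ^n/σℤ^n`. -/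
noncomputable def Dl {n m : ℕ} [NeZero n] (ℓ : ℕ) (σ : Matrix (Fin n) (Fin n) ℤ)
    (e : Fin n → ℕ) (Q : Matrix (Fin m) (Fin n) ℝ) (v : Fin n → ℚ)
    {ι κ : Type} [Fintype ι] [Fintype κ]
    (reps₁ : ι → Fin n → ℤ) (reps₂ : κ → Fin n → ℤ) : ℚ :=
  (∑ i : ι, BBQ (Qtransf σ Q) e
      ((matQ (sigmaL ℓ σ))⁻¹.mulVec (fun j => (reps₁ i j : ℚ) + piLvec ℓ v j)))
  - (ℓ : ℚ) ^ ((1 : ℤ) - (n : ℤ) + ∑ j, (e j : ℤ)) *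
    ∑ i : κ, BBQ (Qtransf σ Q) e ((matQ σ)⁻¹.mulVec (fun j => (reps₂ i j : ℚ) + v j))

/-!
Since `π_ℓ σ = ℓ σ_ℓ`, the vectors `x + σ_ℓ y`, with `x` running over representatives of
`ℤⁿ/σ_ℓℤⁿ` and `y` over `{0,…,ℓ-1}ⁿ`, represent `ℤⁿ/π_ℓσℤⁿ`. Those whose first coordinate
is divisible by `ℓ` (i.e. `L(y) = -x₁` mod `ℓ`) are the `π_ℓ w` with `w` running over
representatives of `ℤⁿ/σℤⁿ`, and for them `σ⁻¹(w + v) = (σ_ℓ⁻¹(x + π_ℓ v) + y)/ℓ`.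
As `𝐁_e` is `ℤⁿ`-periodic, its sums over two representative systems of the same lattice agree;
this gives the decomposition, and applied to the shift `y ↦ y + t` it shows that each summand
depends only on the class of `x`.
-/

open Matrix

namespace IsRepSystem

variable {n : ℕ} {ι κ : Type} [Fintype ι] [Fintype κ]

theorem sum_eq {β : Type*} [AddCommMonoid β] {M : Matrix (Fin n) (Fin n) ℤ}
    {r : ι → Fin n → ℤ} {r' : κ → Fin n → ℤ} (h : IsRepSystem M r) (h' : IsRepSystem M r')
    {g : (Fin n → ℤ) → β} (hg : ∀ z t, g (z + M *ᵥ t) = g z) :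
    ∑ i, g (r i) = ∑ j, g (r' j) := by
  choose e he using fun i => (h' (r i)).exists
  refine Fintype.sum_bijective e ⟨fun i i' hii' => ?_, fun j => ?_⟩ _ _ fun i => ?_
  · obtain ⟨t, ht⟩ := he i
    obtain ⟨t', ht'⟩ := he i'
    exact (h (r i)).unique ⟨0, by simp⟩
      ⟨t - t', by rw [ht, ht', hii', mulVec_sub]; abel⟩
  · obtain ⟨i, t, ht⟩ := (h (r' j)).exists
    exact ⟨i, (h' (r i)).unique (he i) ⟨-t, by rw [ht, mulVec_neg]; abel⟩⟩
  · obtain ⟨t, ht⟩ := he i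
    rw [ht, hg]

theorem add_const {M : Matrix (Fin n) (Fin n) ℤ} {r : ι → Fin n → ℤ} (h : IsRepSystem M r)
    (c : Fin n → ℤ) : IsRepSystem M (fun i => r i + c) := by
  intro w
  have hc : ∀ i, (∃ t, w = r i + c + M *ᵥ t) ↔ ∃ t, w - c = r i + M *ᵥ t := fun i =>
    exists_congr fun t => by rw [sub_eq_iff_eq_add, add_right_comm]
  simpa only [hc] using h (w - c)

theorem mul {A B : Matrix (Fin n) (Fin n) ℤ} (hA : Function.Injective A.mulVec)
    {r₁ : ι → Fin n → ℤ} {r₂ : κ → Fin n → ℤ} (h₁ : IsRepSystem A r₁) (h₂ : IsRepSystem B r₂) :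
    IsRepSystem (A * B) (fun p : ι × κ => r₁ p.1 + A *ᵥ r₂ p.2) := by
  intro w
  obtain ⟨i, ⟨t, ht⟩, hi⟩ := h₁ w
  obtain ⟨j, ⟨s, hs⟩, hj⟩ := h₂ t
  refine ⟨(i, j), ⟨s, by rw [ht, hs, ← mulVec_mulVec, mulVec_add, add_assoc]⟩, ?_⟩
  rintro ⟨i', j'⟩ ⟨s', hs'⟩
  obtain rfl : i' = i := hi i' ⟨r₂ j' + B *ᵥ s', by
    rw [hs', mulVec_add, ← mulVec_mulVec, add_assoc]⟩
  obtain rfl : j' = j := hj j' ⟨s', hA <| add_left_cancel (a := r₁ i') <| by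
    rw [← ht, hs', mulVec_add, ← mulVec_mulVec, add_assoc]⟩
  rfl

theorem preimage_mulVec {P N : Matrix (Fin n) (Fin n) ℤ} (hP : Function.Injective P.mulVec)
    {r : ι → Fin n → ℤ} (h : IsRepSystem (P * N) r) :
    IsRepSystem N (fun a : {i // ∃ z, P *ᵥ z = r i} => a.2.choose) := by
  intro w
  obtain ⟨i, ⟨t, ht⟩, hi⟩ := h (P *ᵥ w)
  have hz : P *ᵥ (w - N *ᵥ t) = r i := by
    rw [mulVec_sub, mulVec_mulVec, ht, add_sub_cancel_right]
  refine ⟨⟨i, _, hz⟩, ⟨t, ?_⟩, ?_⟩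
  · have hc : (⟨i, _, hz⟩ : {i // ∃ z, P *ᵥ z = r i}).2.choose = w - N *ᵥ t :=
      hP ((⟨i, _, hz⟩ : {i // ∃ z, P *ᵥ z = r i}).2.choose_spec.trans hz.symm)
    simp only [hc, sub_add_cancel]
  · rintro ⟨i', hi'⟩ ⟨t', ht'⟩
    refine Subtype.ext (hi i' ⟨t', ?_⟩)
    rw [ht', mulVec_add, hi'.choose_spec, mulVec_mulVec]

end IsRepSystem

theorem isRepSystem_smul_one (n ℓ : ℕ) [NeZero ℓ] :
    IsRepSystem ((ℓ : ℤ) • (1 : Matrix (Fin n) (Fin n) ℤ))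
      (fun (y : Fin n → Fin ℓ) j => ((y j : ℕ) : ℤ)) := by
  have hℓ : (0 : ℤ) < ℓ := by exact_mod_cast Nat.pos_of_neZero ℓ
  intro w
  refine ⟨fun j => ⟨(w j % ℓ).toNat, by
    have := Int.emod_lt_of_pos (w j) hℓ; have := Int.emod_nonneg (w j) hℓ.ne'; omega⟩,
    ⟨fun j => w j / ℓ, ?_⟩, ?_⟩
  · funext j
    simp only [smul_mulVec, one_mulVec, Pi.add_apply, Pi.smul_apply, smul_eq_mul]
    rw [Int.toNat_of_nonneg (Int.emod_nonneg _ hℓ.ne'), Int.emod_add_mul_ediv]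
  · rintro y ⟨s, hs⟩
    funext j
    have hj := congrFun hs j
    simp only [smul_mulVec, one_mulVec, Pi.add_apply, Pi.smul_apply,
      smul_eq_mul] at hj
    have hy : w j % ℓ = ((y j : ℕ) : ℤ) := by
      rw [hj, Int.add_mul_emod_self_left, Int.emod_eq_of_lt (by omega) (by omega)]
    exact Fin.ext (by simp [hy])

theorem periodicBernoulliQ_add_int (k : ℕ) (x : ℚ) (z : ℤ) :
    periodicBernoulliQ k (x + z) = periodicBernoulliQ k x := by
  have hint : (∃ w : ℤ, x + z = w) ↔ ∃ w : ℤ, x = w :=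
    ⟨fun ⟨w, h⟩ => ⟨w - z, by push_cast; linarith⟩,
      fun ⟨w, h⟩ => ⟨w + z, by push_cast; linarith⟩⟩
  simp only [periodicBernoulliQ, Int.fract_add_intCast, hint]

theorem Jset_add_int {n : ℕ} (e : Fin n → ℕ) (x : Fin n → ℚ) (t : Fin n → ℤ) :
    Jset e (fun j => x j + t j) = Jset e x := by
  ext j
  simp only [Jset, Finset.mem_filter, Finset.mem_univ, true_and]
  refine and_congr_right fun _ => ⟨fun ⟨z, h⟩ => ⟨z - t j, ?_⟩, fun ⟨z, h⟩ => ⟨z + t j, ?_⟩⟩ <;>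
    push_cast <;> linarith

theorem BBQ_add_int {n m : ℕ} (Q : Matrix (Fin m) (Fin n) ℝ) (e : Fin n → ℕ)
    (x : Fin n → ℚ) (t : Fin n → ℤ) :
    BBQ Q e (fun j => x j + t j) = BBQ Q e x := by
  simp only [BBQ, Jset_add_int, periodicBernoulliQ_add_int]

theorem BBLz_add_int {n m ℓ : ℕ} [NeZero ℓ] (a : Fin n → ℤ) (Q : Matrix (Fin m) (Fin n) ℝ)
    (e : Fin n → ℕ) (z : ZMod ℓ) (x : Fin n → ℚ) (t : Fin n → ℤ) :
    BBLz ℓ a Q e (z - ∑ j, (a j : ZMod ℓ) * (t j : ZMod ℓ)) (fun j => x j + t j)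
      = BBLz ℓ a Q e z x := by
  set F : (Fin n → ℤ) → ℚ := fun y =>
    if ∑ j, (a j : ZMod ℓ) * (y j : ZMod ℓ) = z then BBQ Q e (fun j => (x j + y j) / ℓ) else 0
  have hF : ∀ y s, F (y + ((ℓ : ℤ) • (1 : Matrix (Fin n) (Fin n) ℤ)) *ᵥ s) = F y := by
    intro y s
    have hℓ : (ℓ : ℚ) ≠ 0 := Nat.cast_ne_zero.mpr (NeZero.ne ℓ)
    have hvec : y + ((ℓ : ℤ) • (1 : Matrix (Fin n) (Fin n) ℤ)) *ᵥ s
        = fun j => y j + ℓ * s j := by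
      simp only [smul_mulVec, one_mulVec]
      rfl
    have harg : (fun j => (x j + ((y j : ℚ) + ℓ * s j)) / (ℓ : ℚ))
        = fun j => (x j + y j) / ℓ + s j := by
      funext j
      field_simp
      ring
    simp only [F, hvec, harg, BBQ_add_int, Int.cast_add, Int.cast_mul, Int.cast_natCast,
      ZMod.natCast_self, zero_mul, add_zero]
  have hshift := (isRepSystem_smul_one n ℓ).sum_eq ((isRepSystem_smul_one n ℓ).add_const t) hF
  simp only [BBLz, BBQ_add_int]
  congr 2
  calc _ = ∑ y : Fin n → Fin ℓ, F ((fun j => ((y j : ℕ) : ℤ)) + t) :=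
        Finset.sum_congr rfl fun y _ => ?_
    _ = ∑ y : Fin n → Fin ℓ, F (fun j => ((y j : ℕ) : ℤ)) := hshift.symm
    _ = _ := Finset.sum_congr rfl fun y _ => by simp only [F, Int.cast_natCast]
  have hcond : (∑ j, (a j : ZMod ℓ) * ((y j + t j : ℤ) : ZMod ℓ) = z) ↔
      ∑ j, (a j : ZMod ℓ) * ((y j : ℕ) : ZMod ℓ) = z - ∑ j, (a j : ZMod ℓ) * (t j : ZMod ℓ) := by
    simp only [Int.cast_add, Int.cast_natCast, mul_add, Finset.sum_add_distrib,
      eq_sub_iff_add_eq]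
  simp only [F, Pi.add_apply, hcond]
  congr 3 with j
  push_cast
  ring

section Matrices

variable {n : ℕ}

theorem matQ_mul (A B : Matrix (Fin n) (Fin n) ℤ) : matQ (A * B) = matQ A * matQ B :=
  Matrix.map_mul (f := Int.castRingHom ℚ)

theorem matQ_smul (c : ℤ) (A : Matrix (Fin n) (Fin n) ℤ) : matQ (c • A) = (c : ℚ) • matQ A := by
  ext i j
  simp only [matQ, map_apply, Matrix.smul_apply, smul_eq_mul, Int.cast_mul]

theorem matQ_mulVec_intCast (A : Matrix (Fin n) (Fin n) ℤ) (z : Fin n → ℤ) :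
    matQ A *ᵥ (fun j => (z j : ℚ)) = fun j => ((A *ᵥ z) j : ℚ) :=
  funext fun i => (RingHom.map_mulVec (Int.castRingHom ℚ) A z i).symm

theorem det_matQ (A : Matrix (Fin n) (Fin n) ℤ) : (matQ A).det = A.det :=
  (RingHom.map_det (Int.castRingHom ℚ) A).symm

theorem isUnit_det_matQ {M : Matrix (Fin n) (Fin n) ℤ} (hM : M.det ≠ 0) :
    IsUnit (matQ M).det := by
  rw [det_matQ]
  exact isUnit_iff_ne_zero.mpr (Int.cast_ne_zero.mpr hM)

theorem matQ_inv_mulVec_add_mulVec {M : Matrix (Fin n) (Fin n) ℤ} (hM : M.det ≠ 0)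
    (z t : Fin n → ℤ) (w : Fin n → ℚ) :
    (matQ M)⁻¹ *ᵥ (fun j => (((z + M *ᵥ t) j : ℤ) : ℚ) + w j)
      = fun j => ((matQ M)⁻¹ *ᵥ (fun j => (z j : ℚ) + w j)) j + t j := by
  have hsplit : (fun j => (((z + M *ᵥ t) j : ℤ) : ℚ) + w j)
      = (fun j => (z j : ℚ) + w j) + matQ M *ᵥ (fun j => (t j : ℚ)) := by
    rw [matQ_mulVec_intCast]
    funext j
    push_cast [Pi.add_apply]
    ring
  rw [hsplit, mulVec_add, mulVec_mulVec, nonsing_inv_mul _ (isUnit_det_matQ hM), one_mulVec]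
  rfl

theorem det_ne_zero_of_mul_eq_smul {P N M : Matrix (Fin n) (Fin n) ℤ} {c : ℤ}
    (hP : P.det ≠ 0) (hN : N.det ≠ 0) (h : P * N = c • M) : M.det ≠ 0 := by
  intro hM
  have := congrArg det h
  rw [det_mul, det_smul, hM, mul_zero] at this
  exact mul_ne_zero hP hN this

theorem matQ_inv_mulVec_of_mul_eq_smul {P N M : Matrix (Fin n) (Fin n) ℤ} {c : ℤ} (hc : c ≠ 0)
    (hM : M.det ≠ 0) (h : P * N = c • M) (w : Fin n → ℤ) (v : Fin n → ℚ) :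
    (matQ N)⁻¹ *ᵥ (fun j => (w j : ℚ) + v j)
      = (c : ℚ)⁻¹ • ((matQ M)⁻¹ *ᵥ (fun j => ((P *ᵥ w) j : ℚ) + (matQ P *ᵥ v) j)) := by
  have hinv : (matQ N)⁻¹ = (c : ℚ)⁻¹ • ((matQ M)⁻¹ * matQ P) := by
    refine inv_eq_left_inv ?_
    rw [smul_mul_assoc, Matrix.mul_assoc, ← matQ_mul, h, matQ_smul, mul_smul_comm,
      nonsing_inv_mul _ (isUnit_det_matQ hM), smul_smul, inv_mul_cancel₀ (Int.cast_ne_zero.mpr hc),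
      one_smul]
  rw [hinv, smul_mulVec, ← mulVec_mulVec,
    show (fun j => (w j : ℚ) + v j) = (fun j => (w j : ℚ)) + v from rfl, mulVec_add,
    matQ_mulVec_intCast]
  rfl

end Matrices

/-- `π_ℓ = diag(ℓ, 1, …, 1)`. -/
def piLMat (n ℓ : ℕ) [NeZero n] : Matrix (Fin n) (Fin n) ℤ :=
  diagonal fun i => if i = 0 then (ℓ : ℤ) else 1

section FirstCoordinate

variable {n : ℕ} [NeZero n]

theorem det_piLMat (ℓ : ℕ) : (piLMat n ℓ).det = ℓ := by
  simp [piLMat, det_diagonal, Finset.prod_ite_eq']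

theorem matQ_piLMat_mulVec (ℓ : ℕ) (v : Fin n → ℚ) : matQ (piLMat n ℓ) *ᵥ v = piLvec ℓ v := by
  funext j
  by_cases hj : j = 0 <;> simp [matQ, piLMat, piLvec, mulVec_diagonal, hj]

theorem exists_piLMat_mulVec_eq_iff (ℓ : ℕ) (u : Fin n → ℤ) :
    (∃ z, piLMat n ℓ *ᵥ z = u) ↔ (ℓ : ℤ) ∣ u 0 := by
  simp only [funext_iff, piLMat, mulVec_diagonal]
  constructor
  · rintro ⟨z, hz⟩
    exact ⟨z 0, by simp [← hz 0]⟩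
  · rintro ⟨c, hc⟩
    refine ⟨Function.update u 0 c, fun j => ?_⟩
    by_cases hj : j = 0
    · subst hj; simp [hc]
    · simp [hj]

theorem piLMat_mul_eq_smul_sigmaL {ℓ : ℕ} {σ : Matrix (Fin n) (Fin n) ℤ}
    (hrows : ∀ i j, i ≠ (0 : Fin n) → (ℓ : ℤ) ∣ σ i j) :
    piLMat n ℓ * σ = (ℓ : ℤ) • sigmaL ℓ σ := by
  ext i j
  by_cases hi : i = 0
  · subst hi; simp [piLMat, sigmaL, diagonal_mul]
  · simp [piLMat, sigmaL, diagonal_mul, hi, Int.mul_ediv_cancel' (hrows i j hi)]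

theorem det_sigmaL_ne_zero {ℓ : ℕ} (hℓ : ℓ ≠ 0) {σ : Matrix (Fin n) (Fin n) ℤ}
    (hdet : σ.det ≠ 0) (hrows : ∀ i j, i ≠ (0 : Fin n) → (ℓ : ℤ) ∣ σ i j) : (sigmaL ℓ σ).det ≠ 0 :=
  det_ne_zero_of_mul_eq_smul (by rw [det_piLMat]; exact_mod_cast hℓ) hdet
    (piLMat_mul_eq_smul_sigmaL hrows)

theorem sigmaL_mulVec_zero (ℓ : ℕ) (σ : Matrix (Fin n) (Fin n) ℤ) (t : Fin n → ℤ) :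
    (sigmaL ℓ σ *ᵥ t) 0 = ∑ j, σ 0 j * t j := by
  simp [sigmaL, mulVec, dotProduct]

end FirstCoordinate

theorem sum_reps_sigma_eq_sum_reps_sigmaL {n : ℕ} [NeZero n] {ℓ : ℕ} [NeZero ℓ]
    {σ : Matrix (Fin n) (Fin n) ℤ} (hdet : σ.det ≠ 0)
    (hrows : ∀ i j, i ≠ (0 : Fin n) → (ℓ : ℤ) ∣ σ i j)
    {ι κ : Type} [Fintype ι] [Fintype κ]
    {reps₁ : ι → Fin n → ℤ} (h₁ : IsRepSystem (sigmaL ℓ σ) reps₁)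
    {reps₂ : κ → Fin n → ℤ} (h₂ : IsRepSystem σ reps₂)
    {β : Type*} [AddCommMonoid β] (g : (Fin n → ℚ) → β)
    (hg : ∀ x (t : Fin n → ℤ), g (fun j => x j + t j) = g x) (v : Fin n → ℚ) :
    ∑ k, g ((matQ σ)⁻¹ *ᵥ (fun j => (reps₂ k j : ℚ) + v j))
      = ∑ i, ∑ y : Fin n → Fin ℓ,
          if ∑ j, (σ 0 j : ZMod ℓ) * ((y j : ℕ) : ZMod ℓ) = -(reps₁ i 0 : ZMod ℓ) then
            g (fun j => (((matQ (sigmaL ℓ σ))⁻¹ *ᵥ (fun j => (reps₁ i j : ℚ) + piLvec ℓ v j)) j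
              + y j) / ℓ)
          else 0 := by
  have hℓ : (ℓ : ℤ) ≠ 0 := Nat.cast_ne_zero.mpr (NeZero.ne ℓ)
  have hπσ := piLMat_mul_eq_smul_sigmaL hrows
  have hπ : (piLMat n ℓ).det ≠ 0 := by rwa [det_piLMat]
  have hdetL := det_sigmaL_ne_zero (NeZero.ne ℓ) hdet hrows
  set u : ι × (Fin n → Fin ℓ) → Fin n → ℤ :=
    fun p => reps₁ p.1 + sigmaL ℓ σ *ᵥ fun j => ((p.2 j : ℕ) : ℤ)
  have hu : IsRepSystem (piLMat n ℓ * σ) u := by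
    rw [hπσ, ← mul_one (sigmaL ℓ σ), ← Matrix.mul_smul]
    exact h₁.mul (mulVec_injective_of_det_ne_zero hdetL) (isRepSystem_smul_one n ℓ)
  have hcond : ∀ p, (∃ z, piLMat n ℓ *ᵥ z = u p) ↔
      ∑ j, (σ 0 j : ZMod ℓ) * ((p.2 j : ℕ) : ZMod ℓ) = -(reps₁ p.1 0 : ZMod ℓ) := by
    intro p
    rw [exists_piLMat_mulVec_eq_iff, ← ZMod.intCast_zmod_eq_zero_iff_dvd, eq_neg_iff_add_eq_zero,
      add_comm]
    simp [u, sigmaL_mulVec_zero]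
  have hval : ∀ a : {p // ∃ z, piLMat n ℓ *ᵥ z = u p},
      (matQ σ)⁻¹ *ᵥ (fun j => (a.2.choose j : ℚ) + v j)
        = fun j => (((matQ (sigmaL ℓ σ))⁻¹ *ᵥ (fun j => (reps₁ a.1.1 j : ℚ) + piLvec ℓ v j)) j
            + a.1.2 j) / ℓ := by
    rintro ⟨p, hp⟩
    rw [matQ_inv_mulVec_of_mul_eq_smul hℓ hdetL hπσ, hp.choose_spec, matQ_piLMat_mulVec,
      matQ_inv_mulVec_add_mulVec hdetL]
    funext j
    simp [div_eq_inv_mul]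
  rw [h₂.sum_eq (IsRepSystem.preimage_mulVec (mulVec_injective_of_det_ne_zero hπ) hu)
    (g := fun z => g ((matQ σ)⁻¹ *ᵥ (fun j => (z j : ℚ) + v j)))
    (fun z t => by simp only [matQ_inv_mulVec_add_mulVec hdet, hg])]
  simp only [hval]
  rw [← Finset.sum_subtype (Finset.univ.filter fun p => ∃ z, piLMat n ℓ *ᵥ z = u p) (by simp)
    (fun p => g fun j =>
      (((matQ (sigmaL ℓ σ))⁻¹ *ᵥ (fun j => (reps₁ p.1 j : ℚ) + piLvec ℓ v j)) j + p.2 j) / ℓ),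
    Finset.sum_filter, Fintype.sum_prod_type]
  simp only [hcond]

theorem Dl_decomposition_general {n m : ℕ} [NeZero n] (ℓ : ℕ) (hℓ : ℓ.Prime)
    (σ : Matrix (Fin n) (Fin n) ℤ) (hdet : σ.det ≠ 0)
    (hrows : ∀ i j, i ≠ (0 : Fin n) → (ℓ : ℤ) ∣ σ i j)
    (Q : Matrix (Fin m) (Fin n) ℝ)
    (e : Fin n → ℕ) (v : Fin n → ℚ)
    {ι κ : Type} [Fintype ι] [Fintype κ]
    (reps₁ : ι → Fin n → ℤ) (h₁ : IsRepSystem (sigmaL ℓ σ) reps₁)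
    (reps₂ : κ → Fin n → ℤ) (h₂ : IsRepSystem σ reps₂) :
    (∀ x t : Fin n → ℤ,
      BBLz ℓ (fun j => σ 0 j) (Qtransf σ Q) e
          (-(((x + (sigmaL ℓ σ).mulVec t) 0 : ℤ) : ZMod ℓ))
          ((matQ (sigmaL ℓ σ))⁻¹.mulVec
            (fun j => (((x + (sigmaL ℓ σ).mulVec t) j : ℤ) : ℚ) + piLvec ℓ v j))
        = BBLz ℓ (fun j => σ 0 j) (Qtransf σ Q) e (-((x 0 : ℤ) : ZMod ℓ))
            ((matQ (sigmaL ℓ σ))⁻¹.mulVec (fun j => ((x j : ℤ) : ℚ) + piLvec ℓ v j))) ∧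
    Dl ℓ σ e Q v reps₁ reps₂
      = ∑ i : ι, BBLz ℓ (fun j => σ 0 j) (Qtransf σ Q) e (-((reps₁ i 0 : ℤ) : ZMod ℓ))
          ((matQ (sigmaL ℓ σ))⁻¹.mulVec (fun j => ((reps₁ i j : ℤ) : ℚ) + piLvec ℓ v j)) := by
  have : NeZero ℓ := ⟨hℓ.ne_zero⟩
  refine ⟨fun x t => ?_, ?_⟩
  · have hz : -(((x + sigmaL ℓ σ *ᵥ t) 0 : ℤ) : ZMod ℓ)
        = -(x 0 : ZMod ℓ) - ∑ j, (σ 0 j : ZMod ℓ) * (t j : ZMod ℓ) := by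
      rw [Pi.add_apply, sigmaL_mulVec_zero]
      push_cast
      ring
    rw [hz, matQ_inv_mulVec_add_mulVec (det_sigmaL_ne_zero hℓ.ne_zero hdet hrows), BBLz_add_int]
  · rw [Dl, sum_reps_sigma_eq_sum_reps_sigmaL hdet hrows h₁ h₂ _ (BBQ_add_int _ e)]
    simp only [BBLz, Finset.sum_sub_distrib, Finset.mul_sum]

/-- Decomposition of the smoothed Dedekind sum:
`D_ℓ(σ,e,Q,v) = Σ_x 𝐁_e^{L,−x̄₁}(σ_ℓ⁻¹(x+π_ℓ v), σ⁻¹Q)`, the sum over representatives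
`x` of `ℤ^n/σ_ℓℤ^n`; each summand is independent of the chosen representative. -/
theorem Dl_decomposition {n m : ℕ} [NeZero n] (ℓ : ℕ) (hℓ : ℓ.Prime)
    (σ : Matrix (Fin n) (Fin n) ℤ) (hdet : σ.det ≠ 0)
    (hrows : ∀ i j, i ≠ (0 : Fin n) → (ℓ : ℤ) ∣ σ i j)
    (hrow0 : ∀ j, IsCoprime (σ 0 j) (ℓ : ℤ))
    (Q : Matrix (Fin m) (Fin n) ℝ)
    (hQ : ∀ i, ∀ w : Fin n → ℚ, w ≠ 0 → (∑ j, Q i j * (w j : ℝ)) ≠ 0)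
    (e : Fin n → ℕ) (he : ∀ j, 0 < e j) (v : Fin n → ℚ)
    {ι κ : Type} [Fintype ι] [Fintype κ]
    (reps₁ : ι → Fin n → ℤ) (h₁ : IsRepSystem (sigmaL ℓ σ) reps₁)
    (reps₂ : κ → Fin n → ℤ) (h₂ : IsRepSystem σ reps₂) :
    (∀ x t : Fin n → ℤ,
      BBLz ℓ (fun j => σ 0 j) (Qtransf σ Q) e
          (-(((x + (sigmaL ℓ σ).mulVec t) 0 : ℤ) : ZMod ℓ))
          ((matQ (sigmaL ℓ σ))⁻¹.mulVec
            (fun j => (((x + (sigmaL ℓ σ).mulVec t) j : ℤ) : ℚ) + piLvec ℓ v j))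
        = BBLz ℓ (fun j => σ 0 j) (Qtransf σ Q) e (-((x 0 : ℤ) : ZMod ℓ))
            ((matQ (sigmaL ℓ σ))⁻¹.mulVec (fun j => ((x j : ℤ) : ℚ) + piLvec ℓ v j))) ∧
    Dl ℓ σ e Q v reps₁ reps₂
      = ∑ i : ι, BBLz ℓ (fun j => σ 0 j) (Qtransf σ Q) e (-((reps₁ i 0 : ℤ) : ZMod ℓ))
          ((matQ (sigmaL ℓ σ))⁻¹.mulVec (fun j => ((reps₁ i j : ℤ) : ℚ) + piLvec ℓ v j)) :=
  Dl_decomposition_general ℓ hℓ σ hdet hrows Q e v reps₁ h₁ reps₂ h₂
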